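/- arXiv:2203.12528 — 2 statements merged into one kernel-verified Lean document; each statement's English description precedes it below -/
import Mathlib

section
/- In a configuration of order k with m k-planes, each point on s k-planes and each k-plane containing t points, the number of k-planes satisfies m ≥ 1 + t(s-1)/k. -/
/-- In a configuration of order `k` with `m` k-planes, each point on `s` k-planes and
each k-plane containing `t` points, `m ≥ 1 + t(s-1)/k`. -/
theorem config_order_k_plane_lower_bound {α : Type*} [DecidableEq α]
    (P : Finset α) (E : Finset (Finset α)) (k m s t : ℕ)
    (hk : 1 ≤ k)
    (hsub : ∀ e ∈ E, e ⊆ P)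
    (hunique : ∀ S : Finset α, S ⊆ P → S.card = k + 1 →
      (E.filter (fun e => S ⊆ e)).card ≤ 1)
    (hm : E.card = m)
    (hs : ∀ p ∈ P, (E.filter (fun e => p ∈ e)).card = s)
    (ht : ∀ e ∈ E, e.card = t)
    (hks : k + 1 ≤ s) (hkt : k + 1 ≤ t)
    (hne : E.Nonempty) :
    (1 : ℚ) + (t : ℚ) * ((s : ℚ) - 1) / (k : ℚ) ≤ (m : ℚ) := by
  obtain ⟨e, he⟩ := hne
  set F := E.erase e with hF
  -- each point of e lies on s - 1 planes of F
  have hcount : ∀ p ∈ e, (F.filter (fun f => p ∈ f)).card = s - 1 := by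
    intro p hp
    have hpP : p ∈ P := hsub e he hp
    have : F.filter (fun f => p ∈ f) = (E.filter (fun f => p ∈ f)).erase e := by
      ext f
      simp [hF, Finset.mem_erase, Finset.mem_filter, and_comm, and_assoc, and_left_comm]
    rw [this, Finset.card_erase_of_mem (by simp [Finset.mem_filter, he, hp]), hs p hpP]
  -- each plane of F meets e in at most k points
  have hmeet : ∀ f ∈ F, (e.filter (fun p => p ∈ f)).card ≤ k := by
    intro f hf
    by_contra h
    push_neg at h
    obtain ⟨S, hSsub, hScard⟩ := Finset.exists_subset_card_eq h
    have hSe : S ⊆ e := hSsub.trans (Finset.filter_subset _ _)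
    have hSf : S ⊆ f := fun x hx => (Finset.mem_filter.mp (hSsub hx)).2
    have hfE : f ∈ E := Finset.mem_of_mem_erase hf
    have hfne : f ≠ e := Finset.ne_of_mem_erase hf
    have h2 : 2 ≤ (E.filter (fun g => S ⊆ g)).card := by
      have : ({e, f} : Finset (Finset α)) ⊆ E.filter (fun g => S ⊆ g) := by
        intro g hg
        rcases Finset.mem_insert.mp hg with rfl | hg
        · exact Finset.mem_filter.mpr ⟨he, hSe⟩
        · rw [Finset.mem_singleton.mp hg]; exact Finset.mem_filter.mpr ⟨hfE, hSf⟩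
      calc 2 = ({e, f} : Finset (Finset α)).card := by
              rw [Finset.card_insert_of_notMem (by simpa using hfne.symm),
                Finset.card_singleton]
        _ ≤ _ := Finset.card_le_card this
    have := hunique S (hSe.trans (hsub e he)) hScard
    omega
  -- double counting
  have hdc : ∑ p ∈ e, (F.filter (fun f => p ∈ f)).card
      = ∑ f ∈ F, (e.filter (fun p => p ∈ f)).card := by
    simp only [Finset.card_filter]
    exact Finset.sum_comm
  have hleft : ∑ p ∈ e, (F.filter (fun f => p ∈ f)).card = t * (s - 1) := by
    rw [Finset.sum_congr rfl hcount, Finset.sum_const, ht e he, smul_eq_mul]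
  have hright : ∑ f ∈ F, (e.filter (fun p => p ∈ f)).card ≤ (m - 1) * k := by
    calc ∑ f ∈ F, (e.filter (fun p => p ∈ f)).card ≤ ∑ _f ∈ F, k :=
          Finset.sum_le_sum hmeet
      _ = (m - 1) * k := by
          rw [Finset.sum_const, smul_eq_mul, hF, Finset.card_erase_of_mem he, hm]
  have key : t * (s - 1) ≤ (m - 1) * k := by omega
  have hm1 : 1 ≤ m := by
    have := Finset.card_pos.mpr ⟨e, he⟩; omega
  -- pass to ℚ
  have hkQ : (0 : ℚ) < (k : ℚ) := by exact_mod_cast hk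
  have hcast : (t : ℚ) * ((s : ℚ) - 1) ≤ ((m : ℚ) - 1) * (k : ℚ) := by
    have h1 : ((s : ℚ) - 1) = ((s - 1 : ℕ) : ℚ) := by
      have h1' : 1 ≤ s := by omega
      push_cast [h1']; ring
    have h2 : ((m : ℚ) - 1) = ((m - 1 : ℕ) : ℚ) := by
      push_cast [hm1]; ring
    rw [h1, h2]
    exact_mod_cast key
  have hdiv : (t : ℚ) * ((s : ℚ) - 1) / (k : ℚ) ≤ (m : ℚ) - 1 :=
    (div_le_iff₀ hkQ).mpr hcast
  linarith
end

section
/- Let (P₁, L₁) and (P₂, L₂) be configurations of order 1 of types (n₁_{s₁}, m₁_{t₁}) and (n₂_{s₂}, m₂_{t₂}). Define the Cartesian product with points P₁ × P₂ and planes { l₁ × l₂ : l₁ ∈ L₁, l₂ ∈ L₂ }. Then: any max(t₁,t₂)+1 distinct points lie in at most one common plane, there are n₁n₂ points and m₁m₂ planes, each point lies on s₁s₂ planes, and each plane contains t₁t₂ points. -/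
/-- The Cartesian product of two configurations of order 1 of types (n₁_{s₁}, m₁_{t₁})
and (n₂_{s₂}, m₂_{t₂}): points `P₁ × P₂`, planes `l₁ × l₂`. Any `max(t₁,t₂)+1` distinct
points lie in at most one common plane, there are `n₁n₂` points and `m₁m₂` planes, each
point lies on `s₁s₂` planes, and each plane contains `t₁t₂` points. -/
theorem product_configuration {α β : Type*} [DecidableEq α] [DecidableEq β]
    (P₁ : Finset α) (P₂ : Finset β) (L₁ : Finset (Finset α)) (L₂ : Finset (Finset β))
    (n₁ n₂ m₁ m₂ s₁ s₂ t₁ t₂ : ℕ)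
    (hsub₁ : ∀ l ∈ L₁, l ⊆ P₁) (hsub₂ : ∀ l ∈ L₂, l ⊆ P₂)
    (hunique₁ : ∀ p q : α, p ∈ P₁ → q ∈ P₁ → p ≠ q →
      (L₁.filter (fun l => p ∈ l ∧ q ∈ l)).card ≤ 1)
    (hunique₂ : ∀ p q : β, p ∈ P₂ → q ∈ P₂ → p ≠ q →
      (L₂.filter (fun l => p ∈ l ∧ q ∈ l)).card ≤ 1)
    (hn₁ : P₁.card = n₁) (hn₂ : P₂.card = n₂)
    (hm₁ : L₁.card = m₁) (hm₂ : L₂.card = m₂)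
    (hs₁ : ∀ p ∈ P₁, (L₁.filter (fun l => p ∈ l)).card = s₁)
    (hs₂ : ∀ p ∈ P₂, (L₂.filter (fun l => p ∈ l)).card = s₂)
    (ht₁ : ∀ l ∈ L₁, l.card = t₁) (ht₂ : ∀ l ∈ L₂, l.card = t₂)
    (hst₁ : 2 ≤ s₁ ∧ 2 ≤ t₁) (hst₂ : 2 ≤ s₂ ∧ 2 ≤ t₂) :
    let E : Finset (Finset (α × β)) := (L₁ ×ˢ L₂).image (fun pr => pr.1 ×ˢ pr.2)
    (∀ S : Finset (α × β), S ⊆ P₁ ×ˢ P₂ → S.card = max t₁ t₂ + 1 →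
      (E.filter (fun e => S ⊆ e)).card ≤ 1) ∧
    (P₁ ×ˢ P₂).card = n₁ * n₂ ∧ E.card = m₁ * m₂ ∧
    (∀ p ∈ P₁ ×ˢ P₂, (E.filter (fun e => p ∈ e)).card = s₁ * s₂) ∧
    (∀ e ∈ E, e.card = t₁ * t₂) := by
  intro E
  have hne₁ : ∀ l ∈ L₁, l.Nonempty := fun l hl =>
    Finset.card_pos.mp (by rw [ht₁ l hl]; omega)
  have hne₂ : ∀ l ∈ L₂, l.Nonempty := fun l hl =>
    Finset.card_pos.mp (by rw [ht₂ l hl]; omega)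
  have hinj : Set.InjOn (fun pr : Finset α × Finset β => pr.1 ×ˢ pr.2) ↑(L₁ ×ˢ L₂) := by
    rintro ⟨a, b⟩ h1 ⟨c, d⟩ h2 heq
    simp only [Finset.mem_coe, Finset.mem_product] at h1 h2
    simp only at heq
    obtain ⟨b0, hb0⟩ := hne₂ b h1.2
    obtain ⟨d0, hd0⟩ := hne₂ d h2.2
    obtain ⟨a0, ha0⟩ := hne₁ a h1.1
    obtain ⟨c0, hc0⟩ := hne₁ c h2.1
    have hac : a = c := by
      ext x
      constructor
      · intro hx
        have : (x, b0) ∈ c ×ˢ d := heq ▸ Finset.mk_mem_product hx hb0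
        exact (Finset.mem_product.mp this).1
      · intro hx
        have : (x, d0) ∈ a ×ˢ b := heq ▸ Finset.mk_mem_product hx hd0
        exact (Finset.mem_product.mp this).1
    have hbd : b = d := by
      ext y
      constructor
      · intro hy
        have : (a0, y) ∈ c ×ˢ d := heq ▸ Finset.mk_mem_product ha0 hy
        exact (Finset.mem_product.mp this).2
      · intro hy
        have : (c0, y) ∈ a ×ˢ b := heq ▸ Finset.mk_mem_product hc0 hy
        exact (Finset.mem_product.mp this).2
    exact Prod.ext hac hbd
  refine ⟨?_, ?_, ?_, ?_, ?_⟩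
  · -- uniqueness
    intro S hS hScard
    rw [Finset.card_le_one]
    intro e he e' he'
    simp only [E, Finset.mem_filter, Finset.mem_image, Finset.mem_product] at he he'
    obtain ⟨⟨⟨l₁, l₂⟩, ⟨hl₁, hl₂⟩, rfl⟩, hSe⟩ := he
    obtain ⟨⟨⟨l₁', l₂'⟩, ⟨hl₁', hl₂'⟩, rfl⟩, hSe'⟩ := he'
    set A := S.image Prod.fst with hA
    set B := S.image Prod.snd with hB
    have hSAB : S ⊆ A ×ˢ B := by
      intro x hx
      exact Finset.mk_mem_product (Finset.mem_image_of_mem _ hx)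
        (Finset.mem_image_of_mem _ hx)
    have hAl₁ : A ⊆ l₁ := by
      intro x hx
      obtain ⟨p, hp, rfl⟩ := Finset.mem_image.mp hx
      exact (Finset.mem_product.mp (hSe hp)).1
    have hAl₁' : A ⊆ l₁' := by
      intro x hx
      obtain ⟨p, hp, rfl⟩ := Finset.mem_image.mp hx
      exact (Finset.mem_product.mp (hSe' hp)).1
    have hBl₂ : B ⊆ l₂ := by
      intro y hy
      obtain ⟨p, hp, rfl⟩ := Finset.mem_image.mp hy
      exact (Finset.mem_product.mp (hSe hp)).2
    have hBl₂' : B ⊆ l₂' := by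
      intro y hy
      obtain ⟨p, hp, rfl⟩ := Finset.mem_image.mp hy
      exact (Finset.mem_product.mp (hSe' hp)).2
    have hAcard : A.card ≤ t₁ := (ht₁ l₁ hl₁) ▸ Finset.card_le_card hAl₁
    have hBcard : B.card ≤ t₂ := (ht₂ l₂ hl₂) ▸ Finset.card_le_card hBl₂
    have hScard' : S.card ≤ A.card * B.card := by
      calc S.card ≤ (A ×ˢ B).card := Finset.card_le_card hSAB
        _ = A.card * B.card := Finset.card_product A B
    have hA2 : 2 ≤ A.card := by
      by_contra h
      have : S.card ≤ 1 * B.card := hScard'.trans (Nat.mul_le_mul_right _ (by omega))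
      have := max_le_iff (a := t₁) (b := t₂) (c := max t₁ t₂)
      omega
    have hB2 : 2 ≤ B.card := by
      by_contra h
      have : S.card ≤ A.card * 1 := hScard'.trans (Nat.mul_le_mul_left _ (by omega))
      omega
    obtain ⟨a, ha, a', ha', haa⟩ := Finset.one_lt_card.mp hA2
    obtain ⟨b, hb, b', hb', hbb⟩ := Finset.one_lt_card.mp hB2
    have hl₁eq : l₁ = l₁' := by
      have h := hunique₁ a a' (hsub₁ l₁ hl₁ (hAl₁ ha)) (hsub₁ l₁ hl₁ (hAl₁ ha')) haa
      exact Finset.card_le_one.mp h l₁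
        (Finset.mem_filter.mpr ⟨hl₁, hAl₁ ha, hAl₁ ha'⟩) l₁'
        (Finset.mem_filter.mpr ⟨hl₁', hAl₁' ha, hAl₁' ha'⟩)
    have hl₂eq : l₂ = l₂' := by
      have h := hunique₂ b b' (hsub₂ l₂ hl₂ (hBl₂ hb)) (hsub₂ l₂ hl₂ (hBl₂ hb')) hbb
      exact Finset.card_le_one.mp h l₂
        (Finset.mem_filter.mpr ⟨hl₂, hBl₂ hb, hBl₂ hb'⟩) l₂'
        (Finset.mem_filter.mpr ⟨hl₂', hBl₂' hb, hBl₂' hb'⟩)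
    rw [hl₁eq, hl₂eq]
  · rw [Finset.card_product, hn₁, hn₂]
  · rw [show E = (L₁ ×ˢ L₂).image (fun pr => pr.1 ×ˢ pr.2) from rfl,
      Finset.card_image_of_injOn hinj, Finset.card_product, hm₁, hm₂]
  · intro p hp
    rw [Finset.mem_product] at hp
    have key : E.filter (fun e => p ∈ e) =
        ((L₁ ×ˢ L₂).filter (fun pr => p ∈ pr.1 ×ˢ pr.2)).image
          (fun pr => pr.1 ×ˢ pr.2) := by
      rw [Finset.filter_image]
    rw [key, Finset.card_image_of_injOn (hinj.mono (by
      intro x hx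
      simp only [Finset.coe_filter, Set.mem_setOf_eq] at hx
      exact Finset.mem_coe.mpr hx.1))]
    have : ((L₁ ×ˢ L₂).filter (fun pr => p ∈ pr.1 ×ˢ pr.2)) =
        (L₁.filter (fun l => p.1 ∈ l)) ×ˢ (L₂.filter (fun l => p.2 ∈ l)) := by
      ext ⟨x, y⟩
      simp only [Finset.mem_filter, Finset.mem_product]
      tauto
    rw [this, Finset.card_product, hs₁ p.1 hp.1, hs₂ p.2 hp.2]
  · intro e he
    obtain ⟨⟨l₁, l₂⟩, hl, rfl⟩ := Finset.mem_image.mp he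
    rw [Finset.mem_product] at hl
    simp only
    rw [Finset.card_product, ht₁ l₁ hl.1, ht₂ l₂ hl.2]
end
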